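/- Let N > 1 be an integer, let p be a prime factor of N, set ρ = ord_p(N), and let π : (ℤ/Nℤ)[y] → 𝔽_p[y] be the homomorphism induced by reduction modulo p. Let f ∈ ℤ[x] be a nonzero N-robust polynomial and set v = ord_N(f), so that ord_p(f) = ρv. Then in 𝔽_p[y] one has R_{p,0}(f) = c^v · π(R₀(f)), where R_{p,0}(f) denotes the reduction modulo p of f / p^{ρv} (with the variable renamed to y) and c ∈ 𝔽_p is the reduction modulo p of the integer N / p^ρ. -/

import Mathlib

open Polynomial

/-- The `N`-adic pseudo-valuation on `ℤ`: `ordN N a = k` if `N^k ∣ a` and `N^(k+1) ∤ a`,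
and `ordN N 0 = ∞`.  (For `N > 1` this is the `emultiplicity` of `N` in `a`.) -/
noncomputable def ordN (N : ℕ) (a : ℤ) : ℕ∞ := emultiplicity (N : ℤ) a

/-- The natural-number valued `N`-adic valuation of a nonzero integer. -/
noncomputable def ordZ (N : ℕ) (a : ℤ) : ℕ := multiplicity (N : ℤ) a

/-- The extension of `ordN` to `ℤ[x]`: the minimum of `ordN` over the coefficients
(infimum over the support; for the zero polynomial this is `∞`). -/
noncomputable def ordPoly (N : ℕ) (f : ℤ[X]) : ℕ∞ :=
  f.support.inf fun s => ordN N (f.coeff s)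

/-- The natural-number value of `ordPoly N f` (equal to `ord_N(f)` for `f ≠ 0`). -/
noncomputable def ordPolyNat (N : ℕ) (f : ℤ[X]) : ℕ := WithTop.untopD 0 (ordPoly N f)

/-- The residual polynomial operator of order zero: `R₀(f)` is the reduction modulo `N`
of `f / N^(ord_N f)` (with the variable renamed to `y`), and `R₀(0) = 0`. -/
noncomputable def R0 (N : ℕ) (f : ℤ[X]) : Polynomial (ZMod N) :=
  (f.sum fun s a => C (a / (N : ℤ) ^ ordPolyNat N f) * X ^ s).map
    (Int.castRingHom (ZMod N))

/-- `f ∈ ℤ[x]` is `N`-robust if every nonzero coefficient `a` of `f` satisfies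
`gcd (a / N^(ord_N a), N) = 1` (i.e. every nonzero coefficient is `ord_N`-stable). -/
def NRobust (N : ℕ) (f : ℤ[X]) : Prop :=
  ∀ s ∈ f.support, Int.gcd (f.coeff s / (N : ℤ) ^ ordZ N (f.coeff s)) N = 1

/-! Robustness writes each nonzero coefficient as `N^k * b` with `b` prime to `N`, hence to `p`,
so its `p`-adic valuation is exactly `ρ k`; taking minima gives `ord_p f = ρ v`. Since
`N^v = p^(ρv) * c^v` divides every coefficient, `f / p^(ρv) = c^v * (f / N^v)` already over `ℤ`,
and reducing modulo `p` (which factors through `ℤ/Nℤ`) gives the identity of residual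
polynomials. -/

theorem emultiplicity_pow_mul_of_not_dvd {α : Type*} [CommMonoidWithZero α] [IsCancelMulZero α]
    {p b : α} (hp : Prime p) (hb : ¬ p ∣ b) (a : α) (k : ℕ) :
    emultiplicity p (a ^ k * b) = k * emultiplicity p a := by
  rw [emultiplicity_mul hp, emultiplicity_pow hp, emultiplicity_eq_zero.2 hb, add_zero]

theorem ordN_eq_ordZ_mul_ordN {N p : ℕ} (hN : 1 < N) (hp : p.Prime) (hpN : p ∣ N) {a : ℤ}
    (ha : a ≠ 0) (hcop : Int.gcd (a / (N : ℤ) ^ ordZ N a) N = 1) :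
    ordN p a = ordZ p N * ordN N a := by
  have hpZ : Prime (p : ℤ) := Nat.prime_iff_prime_int.mp hp
  have hfin : FiniteMultiplicity (N : ℤ) a :=
    Int.finiteMultiplicity_iff.2 ⟨by simpa using hN.ne', ha⟩
  have hfinp : FiniteMultiplicity (p : ℤ) N :=
    Int.finiteMultiplicity_iff.2
      ⟨by simpa using hp.ne_one, by exact_mod_cast (by omega : N ≠ 0)⟩
  have hunit : ¬ (p : ℤ) ∣ a / (N : ℤ) ^ ordZ N a := fun hdvd =>
    hpZ.not_isUnit ((Int.isCoprime_iff_gcd_eq_one.mpr hcop).isUnit_of_dvd' hdvd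
      (Int.natCast_dvd_natCast.mpr hpN))
  have hsplit : (N : ℤ) ^ ordZ N a * (a / (N : ℤ) ^ ordZ N a) = a :=
    Int.mul_ediv_cancel' (pow_multiplicity_dvd _ _)
  rw [ordN, ← hsplit, emultiplicity_pow_mul_of_not_dvd hpZ hunit, hsplit, ordN,
    hfin.emultiplicity_eq_multiplicity, hfinp.emultiplicity_eq_multiplicity, ordZ, ordZ, mul_comm]

theorem ordPoly_eq_ordZ_mul_ordPoly {N p : ℕ} (hN : 1 < N) (hp : p.Prime) (hpN : p ∣ N)
    {f : ℤ[X]} (hf : f ≠ 0) (hrob : NRobust N f) :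
    ordPoly p f = ordZ p N * ordPoly N f := by
  have hsupp : f.support.Nonempty := support_nonempty.mpr hf
  have hmono : Monotone fun x : ℕ∞ => (ordZ p N : ℕ∞) * x :=
    fun _ _ h => mul_le_mul_right h _
  rw [ordPoly, ordPoly, ← Finset.inf'_eq_inf hsupp, ← Finset.inf'_eq_inf hsupp,
    Finset.apply_inf'_eq_inf'_comp hsupp _ fun x y => hmono.map_min]
  exact Finset.inf'_congr hsupp rfl fun s hs =>
    ordN_eq_ordZ_mul_ordN hN hp hpN (mem_support_iff.mp hs) (hrob s hs)

theorem pow_dvd_coeff_of_le_ordPoly {N : ℕ} {f : ℤ[X]} {v : ℕ}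
    (hv : (v : ℕ∞) ≤ ordPoly N f) (n : ℕ) : (N : ℤ) ^ v ∣ f.coeff n := by
  by_cases hn : n ∈ f.support
  · exact pow_dvd_of_le_emultiplicity (hv.trans (Finset.inf_le hn))
  · rw [notMem_support_iff.mp hn]
    exact dvd_zero _

theorem coeff_sum_C_ediv_mul_X_pow (f : ℤ[X]) (d : ℤ) (n : ℕ) :
    (f.sum fun s a => C (a / d) * X ^ s).coeff n = f.coeff n / d := by
  simp only [Polynomial.sum, finsetSum_coeff, coeff_C_mul_X_pow, Finset.sum_ite_eq,
    mem_support_iff]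
  split_ifs with h <;> simp_all

theorem sum_C_ediv_mul_X_pow_of_dvd {f : ℤ[X]} {d e m : ℤ} (hd : ∀ n, d ∣ f.coeff n)
    (hdem : d = e * m) (he : e ≠ 0) :
    (f.sum fun s a => C (a / e) * X ^ s) = C m * f.sum fun s a => C (a / d) * X ^ s := by
  subst hdem
  ext n
  rw [coeff_sum_C_ediv_mul_X_pow, coeff_C_mul, coeff_sum_C_ediv_mul_X_pow]
  obtain ⟨t, ht⟩ := hd n
  rcases eq_or_ne m 0 with rfl | hm
  · simp [ht]
  rw [ht, mul_assoc, Int.mul_ediv_cancel_left _ he, ← mul_assoc,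
    Int.mul_ediv_cancel_left _ (mul_ne_zero he hm)]

/-- Let `N > 1`, let `p` be a prime factor of `N`, set `ρ = ord_p N`, and
let `π : (ℤ/Nℤ)[y] → 𝔽_p[y]` be the homomorphism induced by reduction modulo `p`.  Let
`f ∈ ℤ[x]` be a nonzero `N`-robust polynomial and set `v = ord_N f`, so that
`ord_p f = ρ·v`.  Then in `𝔽_p[y]` one has `R_{p,0}(f) = c^v · π(R₀(f))`, where
`R_{p,0}(f)` is the reduction modulo `p` of `f / p^(ρv)` (variable renamed to `y`) and
`c ∈ 𝔽_p` is the reduction modulo `p` of the integer `N / p^ρ`. -/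
theorem statement11 (N : ℕ) (hN : 1 < N) (p : ℕ) (hp : p.Prime) (hpN : p ∣ N)
    (f : ℤ[X]) (hf : f ≠ 0) (hrob : NRobust N f)
    (ρ : ℕ) (hρ : ρ = ordZ p (N : ℤ))
    (v : ℕ) (hv : (v : ℕ∞) = ordPoly N f) :
    ordPoly p f = ((ρ * v : ℕ) : ℕ∞) ∧
      (f.sum fun s a => C (a / (p : ℤ) ^ (ρ * v)) * X ^ s).map (Int.castRingHom (ZMod p)) =
        C (((N : ℤ) / (p : ℤ) ^ ρ : ℤ) : ZMod p) ^ v *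
          (R0 N f).map (ZMod.castHom hpN (ZMod p)) := by
  have hpZ : (p : ℤ) ≠ 0 := by exact_mod_cast hp.ne_zero
  have hNsplit : (N : ℤ) ^ v = (p : ℤ) ^ (ρ * v) * ((N : ℤ) / (p : ℤ) ^ ρ) ^ v := by
    rw [pow_mul, ← mul_pow, Int.mul_ediv_cancel' (hρ ▸ pow_multiplicity_dvd _ _)]
  have hR0 : R0 N f = (f.sum fun s a => C (a / (N : ℤ) ^ v) * X ^ s).map
      (Int.castRingHom (ZMod N)) := by
    rw [R0, ordPolyNat, ← hv]
    rfl
  constructor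
  · rw [ordPoly_eq_ordZ_mul_ordPoly hN hp hpN hf hrob, ← hv, ← hρ, Nat.cast_mul]
  · rw [sum_C_ediv_mul_X_pow_of_dvd (pow_dvd_coeff_of_le_ordPoly hv.le) hNsplit
        (pow_ne_zero _ hpZ),
      hR0, Polynomial.map_mul, map_C, map_map,
      RingHom.ext_int ((ZMod.castHom hpN (ZMod p)).comp (Int.castRingHom (ZMod N)))
        (Int.castRingHom (ZMod p))]
    simp
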